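/- arXiv:1105.3074 — 9 statements merged into one kernel-verified Lean document; each statement's English description precedes it below -/
import Mathlib

section
/- Let g > 0, h₀ > 0, u₀, a₀, a ∈ ℝ and let φ(h) = 2g·h³ + (2g(a − a₀ − h₀) − u₀²)·h² + h₀²·u₀². If a > a₀ + h₀ + u₀²/(2g), then φ(h) > 0 for every h > 0; in particular the equation φ(h) = 0 has no root h > 0. -/
lemma cubic_pos_of_pos_sq_coeff {b c d x : ℝ} (hb : 0 ≤ b) (hc : 0 < c) (hd : 0 ≤ d)
    (hx : 0 < x) : 0 < b * x ^ 3 + c * x ^ 2 + d := by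
  have : 0 < c * x ^ 2 := by positivity
  have : 0 ≤ b * x ^ 3 := by positivity
  linarith

theorem stmt_0_general (g h₀ u₀ a₀ a : ℝ) (hg : 0 < g)
    (φ : ℝ → ℝ)
    (hφ : ∀ h, φ h = 2*g*h^3 + (2*g*(a - a₀ - h₀) - u₀^2)*h^2 + h₀^2*u₀^2)
    (ha : a > a₀ + h₀ + u₀^2 / (2*g)) :
    (∀ h, 0 < h → 0 < φ h) ∧ ¬ ∃ h, 0 < h ∧ φ h = 0 := by
  have h2g : 0 < 2 * g := by positivity
  have hcoef : 0 < 2*g*(a - a₀ - h₀) - u₀^2 :=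
    sub_pos.mpr ((div_lt_iff₀' h2g).mp (by linarith))
  have hpos : ∀ h, 0 < h → 0 < φ h := fun h hh => by
    rw [hφ]
    exact cubic_pos_of_pos_sq_coeff h2g.le hcoef (by positivity) hh
  exact ⟨hpos, fun ⟨h, hh, hroot⟩ => (hpos h hh).ne' hroot⟩

/-- If `a > a₀ + h₀ + u₀²/(2g)`, then the cubic
`φ(h) = 2g h³ + (2g(a - a₀ - h₀) - u₀²) h² + h₀² u₀²` is positive for every `h > 0`;
in particular `φ(h) = 0` has no root `h > 0`. -/
theorem stmt_0 (g h₀ u₀ a₀ a : ℝ) (hg : 0 < g) (hh₀ : 0 < h₀)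
    (φ : ℝ → ℝ)
    (hφ : ∀ h, φ h = 2*g*h^3 + (2*g*(a - a₀ - h₀) - u₀^2)*h^2 + h₀^2*u₀^2)
    (ha : a > a₀ + h₀ + u₀^2 / (2*g)) :
    (∀ h, 0 < h → 0 < φ h) ∧ ¬ ∃ h, 0 < h ∧ φ h = 0 :=
  stmt_0_general g h₀ u₀ a₀ a hg φ hφ ha
end

section
/- Let g > 0, h₀ > 0, u₀ ∈ ℝ, a₀ ∈ ℝ, and a_max = a₀ + h₀ + u₀²/(2g) − (3/(2g^{1/3}))·(h₀²·u₀²)^{1/3}. Then a_max − a₀ = (1/(2g))·((g·h₀)^{1/3} − (u₀²)^{1/3})²·(2(g·h₀)^{1/3} + (u₀²)^{1/3}); consequently a_max ≥ a₀, with equality a_max = a₀ if and only if u₀² = g·h₀ (i.e. if and only if (h₀, u₀) lies on the resonance surface 𝒞 = {|u| = √(gh)}). -/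
/-!
Write `G, H, y` for the real cube roots of `g, h₀, u₀²`, so that `(g h₀)^{1/3} = G H` and
`(h₀² u₀²)^{1/3} = H² y`. Then `a_max - a₀` is a rational function of `G, H, y`, and clearing the
denominator `2G³` leaves the cubic `2(GH)³ - 3(GH)² y + y³ = (GH - y)² (2GH + y)`, which has a
double root at `y = GH`. For `GH > 0 ≤ y` the right-hand side is nonnegative and vanishes
exactly when `y = GH`, i.e. when `u₀² = g h₀`.
-/

open Real

lemma rpow_one_third_pow_three {x : ℝ} (hx : 0 ≤ x) : (x ^ ((1 : ℝ) / 3)) ^ 3 = x := by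
  simpa [one_div] using rpow_inv_natCast_pow hx (n := 3) three_ne_zero

lemma add_div_sub_mul_eq_of_pow_three {g h w G H y : ℝ} (hG0 : G ≠ 0) (hG : G ^ 3 = g)
    (hH : H ^ 3 = h) (hy : y ^ 3 = w) :
    h + w / (2 * g) - 3 / (2 * G) * (H ^ 2 * y) =
      1 / (2 * g) * (G * H - y) ^ 2 * (2 * (G * H) + y) := by
  subst hG hH hy
  field_simp
  ring

lemma sq_sub_mul_two_mul_add_eq_zero_iff {x y : ℝ} (hx : 0 < x) (hy : 0 ≤ y) :
    (x - y) ^ 2 * (2 * x + y) = 0 ↔ y = x := by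
  rw [mul_eq_zero, or_iff_left (by positivity), sq_eq_zero_iff, sub_eq_zero, eq_comm]

/-- `a_max - a₀ = (1/(2g)) ((g h₀)^(1/3) - (u₀²)^(1/3))² (2 (g h₀)^(1/3) + (u₀²)^(1/3))`,
hence `a_max ≥ a₀` with equality iff `u₀² = g h₀` (resonance surface). -/
theorem stmt_4 (g h₀ u₀ a₀ : ℝ) (hg : 0 < g) (hh₀ : 0 < h₀)
    (amax : ℝ)
    (hamax : amax = a₀ + h₀ + u₀^2/(2*g) - (3/(2*g ^ ((1:ℝ)/3))) * (h₀^2 * u₀^2) ^ ((1:ℝ)/3)) :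
    amax - a₀ = (1/(2*g)) * ((g*h₀) ^ ((1:ℝ)/3) - (u₀^2) ^ ((1:ℝ)/3))^2 *
        (2*(g*h₀) ^ ((1:ℝ)/3) + (u₀^2) ^ ((1:ℝ)/3)) ∧
    a₀ ≤ amax ∧ (amax = a₀ ↔ u₀^2 = g*h₀) := by
  set x := (g * h₀) ^ ((1 : ℝ) / 3)
  set y := (u₀ ^ 2) ^ ((1 : ℝ) / 3)
  have hx : 0 < x := by positivity
  have hy : 0 ≤ y := by positivity
  have hx_mul : x = g ^ ((1 : ℝ) / 3) * h₀ ^ ((1 : ℝ) / 3) := mul_rpow hg.le hh₀.le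
  have hprod : (h₀ ^ 2 * u₀ ^ 2) ^ ((1 : ℝ) / 3) = (h₀ ^ ((1 : ℝ) / 3)) ^ 2 * y := by
    rw [mul_rpow (by positivity) (sq_nonneg _), rpow_pow_comm hh₀.le]
  have key : amax - a₀ = 1 / (2 * g) * (x - y) ^ 2 * (2 * x + y) := by
    rw [hamax, hprod, hx_mul, ← add_div_sub_mul_eq_of_pow_three (by positivity)
      (rpow_one_third_pow_three hg.le) (rpow_one_third_pow_three hh₀.le)
      (rpow_one_third_pow_three (sq_nonneg u₀))]
    ring
  refine ⟨key, sub_nonneg.mp (key ▸ by positivity), ?_⟩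
  calc amax = a₀ ↔ (x - y) ^ 2 * (2 * x + y) = 0 := by
        rw [← sub_eq_zero, key, mul_assoc, mul_eq_zero, or_iff_right (by positivity)]
    _ ↔ y = x := sq_sub_mul_two_mul_add_eq_zero_iff hx hy
    _ ↔ u₀ ^ 2 = g * h₀ := rpow_left_inj (sq_nonneg _) (by positivity) (by norm_num)
end

section
/- Let g > 0, h₀ > 0, u₀ ≠ 0, a₀, a ∈ ℝ, φ(h) = 2g·h³ + (2g(a − a₀ − h₀) − u₀²)·h² + h₀²·u₀², h_min = (h₀²·u₀²/g)^{1/3}, and a_max = a₀ + h₀ + u₀²/(2g) − (3/(2g^{1/3}))·(h₀²·u₀²)^{1/3}. Then φ(h_min) = 3·(h₀·u₀)² + (2g(a − a₀ − h₀) − u₀²)·((h₀·u₀)²)^{2/3}/g^{2/3}, and a < a_max if and only if φ(h_min) < 0. -/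
/-!
Write `k = (h₀² u₀²)^{1/3}` and `m = g^{1/3}`, so that `h_min = k / m`, `g = m³` and `h₀² u₀² = k³`.
Then `φ(h_min) = 3k³ + B k² / m²` with `B = 2g(a - a₀ - h₀) - u₀²`, and after clearing the positive
factors `k² / m²` and `2m³`, both `φ(h_min) < 0` and `a < a_max` become `B < -3 k m²`.
-/

open Real

lemma rpow_two_thirds_eq_sq {x : ℝ} (hx : 0 ≤ x) :
    x ^ ((2 : ℝ) / 3) = (x ^ ((1 : ℝ) / 3)) ^ 2 := by
  rw [← rpow_natCast, ← rpow_mul hx]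
  norm_num

lemma cubic_eval_div {k m B : ℝ} (hm : m ≠ 0) :
    2 * m ^ 3 * (k / m) ^ 3 + B * (k / m) ^ 2 + k ^ 3 = 3 * k ^ 3 + B * k ^ 2 / m ^ 2 := by
  field_simp
  ring

lemma three_cube_add_div_neg_iff {k m B : ℝ} (hk : 0 < k) (hm : 0 < m) :
    3 * k ^ 3 + B * k ^ 2 / m ^ 2 < 0 ↔ B < -3 * k * m ^ 2 := by
  have hfactor : 3 * k ^ 3 + B * k ^ 2 / m ^ 2 = k ^ 2 / m ^ 2 * (B + 3 * k * m ^ 2) := by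
    field_simp
    ring
  rw [hfactor, ← smul_eq_mul, smul_neg_iff_of_pos_left (by positivity), ← lt_neg_iff_add_neg]
  ring_nf

lemma lt_add_div_sub_iff {a s u k m : ℝ} (hm : 0 < m) :
    a < s + u / (2 * m ^ 3) - 3 / (2 * m) * k ↔ 2 * m ^ 3 * (a - s) - u < -3 * k * m ^ 2 := by
  have hsum : s + u / (2 * m ^ 3) - 3 / (2 * m) * k =
      (2 * m ^ 3 * s + u - 3 * k * m ^ 2) / (2 * m ^ 3) := by
    field_simp
  rw [hsum, lt_div_iff₀ (by positivity)]
  constructor <;> intro h <;> linarith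

/-- `φ(h_min) = 3 (h₀ u₀)² + (2g(a - a₀ - h₀) - u₀²) ((h₀ u₀)²)^(2/3) / g^(2/3)`,
and `a < a_max` iff `φ(h_min) < 0`. -/
theorem stmt_7 (g h₀ u₀ a₀ a : ℝ) (hg : 0 < g) (hh₀ : 0 < h₀) (hu₀ : u₀ ≠ 0)
    (φ : ℝ → ℝ)
    (hφ : ∀ h, φ h = 2*g*h^3 + (2*g*(a - a₀ - h₀) - u₀^2)*h^2 + h₀^2*u₀^2)
    (hmin amax : ℝ)
    (hhmin : hmin = (h₀^2 * u₀^2 / g) ^ ((1:ℝ)/3))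
    (hamax : amax = a₀ + h₀ + u₀^2/(2*g) - (3/(2*g ^ ((1:ℝ)/3))) * (h₀^2 * u₀^2) ^ ((1:ℝ)/3)) :
    φ hmin = 3*(h₀*u₀)^2 + (2*g*(a - a₀ - h₀) - u₀^2) * ((h₀*u₀)^2) ^ ((2:ℝ)/3) / g ^ ((2:ℝ)/3) ∧
    (a < amax ↔ φ hmin < 0) := by
  have hc : 0 < h₀ ^ 2 * u₀ ^ 2 := by positivity
  set k := (h₀ ^ 2 * u₀ ^ 2) ^ ((1 : ℝ) / 3)
  set m := g ^ ((1 : ℝ) / 3)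
  have hk : 0 < k := rpow_pos_of_pos hc _
  have hm : 0 < m := rpow_pos_of_pos hg _
  have hk3 : k ^ 3 = h₀ ^ 2 * u₀ ^ 2 := rpow_one_third_pow_three hc.le
  have hm3 : m ^ 3 = g := rpow_one_third_pow_three hg.le
  have hmin_eq : hmin = k / m := by rw [hhmin, div_rpow hc.le hg.le]
  have hφmin : φ hmin = 3 * k ^ 3 + (2*g*(a - a₀ - h₀) - u₀^2) * k ^ 2 / m ^ 2 := by
    rw [hφ, hmin_eq, ← hk3, ← hm3, cubic_eval_div hm.ne']
  refine ⟨?_, ?_⟩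
  · rw [hφmin, mul_pow, rpow_two_thirds_eq_sq hc.le, rpow_two_thirds_eq_sq hg.le, hk3]
  · rw [hφmin, three_cube_add_div_neg_iff hk hm, hamax, ← hm3, lt_add_div_sub_iff hm, sub_sub]
end

section
/- Let g > 0, h₀ > 0, u₀ ≠ 0, a₀, a ∈ ℝ with a < a_max = a₀ + h₀ + u₀²/(2g) − (3/(2g^{1/3}))·(h₀²·u₀²)^{1/3}, and let φ(h) = 2g·h³ + (2g(a − a₀ − h₀) − u₀²)·h² + h₀²·u₀², h⋆ = (u₀² + 2g(a₀ + h₀ − a))/(3g), h_min = (h₀²·u₀²/g)^{1/3}. If h₁, h₂ satisfy 0 < h₁ < h⋆ < h₂ and φ(h₁) = φ(h₂) = 0, then h₁ < h_min < h₂; consequently the velocities u_i = h₀·u₀/h_i satisfy u₁² > g·h₁ (the state (h₁, u₁, a) lies in the supersonic region G₁ ∪ G₃) and u₂² < g·h₂ (the state (h₂, u₂, a) lies in the subsonic region G₂). -/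
/-!
Since `3 g h⋆ = u₀² + 2 g (a₀ + h₀ - a)`, the cubic is `φ(h) = h₀² u₀² - g h² (3 h⋆ - 2 h)`, so
every root satisfies `h₀² u₀² = g h² (3 h⋆ - 2 h)`. The right-hand side minus `g h³` is
`3 g h² (h⋆ - h)`, hence `g h₁³ < h₀² u₀² = g h_min³ < g h₂³`. Taking cube roots gives
`h₁ < h_min < h₂`, and `g h³ < h₀² u₀²` is the supersonic condition `g h < u²` for `u = h₀ u₀ / h`.
-/

section CubicComparison

variable {g s h : ℝ}

theorem mul_cube_lt_of_lt (hg : 0 < g) (hh : h ≠ 0) (hs : h < s) :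
    g * h ^ 3 < g * h ^ 2 * (3 * s - 2 * h) := by
  have : 0 < 3 * g * h ^ 2 * (s - h) := by
    have := sub_pos.2 hs
    positivity
  linarith [show g * h ^ 2 * (3 * s - 2 * h) - g * h ^ 3 = 3 * g * h ^ 2 * (s - h) by ring]

theorem lt_mul_cube_of_lt (hg : 0 < g) (hh : h ≠ 0) (hs : s < h) :
    g * h ^ 2 * (3 * s - 2 * h) < g * h ^ 3 := by
  have : 0 < 3 * g * h ^ 2 * (h - s) := by
    have := sub_pos.2 hs
    positivity
  linarith [show g * h ^ 3 - g * h ^ 2 * (3 * s - 2 * h) = 3 * g * h ^ 2 * (h - s) by ring]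

end CubicComparison

section Velocity

variable {c g h : ℝ}

theorem mul_lt_div_sq_iff (hh : h ≠ 0) : g * h < (c / h) ^ 2 ↔ g * h ^ 3 < c ^ 2 := by
  rw [div_pow, lt_div_iff₀ (by positivity)]
  ring_nf

theorem div_sq_lt_mul_iff (hh : h ≠ 0) : (c / h) ^ 2 < g * h ↔ c ^ 2 < g * h ^ 3 := by
  rw [div_pow, div_lt_iff₀ (by positivity)]
  ring_nf

end Velocity

theorem stmt_8_general (g h₀ u₀ a₀ a : ℝ) (hg : 0 < g)
    (φ : ℝ → ℝ)
    (hφ : ∀ h, φ h = 2*g*h^3 + (2*g*(a - a₀ - h₀) - u₀^2)*h^2 + h₀^2*u₀^2)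
    (hstar hmin : ℝ)
    (hhstar : hstar = (u₀^2 + 2*g*(a₀ + h₀ - a)) / (3*g))
    (hhmin : hmin = (h₀^2 * u₀^2 / g) ^ ((1:ℝ)/3))
    (h₁ h₂ : ℝ) (h₁pos : 0 < h₁) (h₁lt : h₁ < hstar) (h₂gt : hstar < h₂)
    (hroot₁ : φ h₁ = 0) (hroot₂ : φ h₂ = 0) :
    h₁ < hmin ∧ hmin < h₂ ∧
    (h₀*u₀/h₁)^2 > g*h₁ ∧ (h₀*u₀/h₂)^2 < g*h₂ := by
  have hmin_cube : g * hmin ^ 3 = (h₀ * u₀) ^ 2 := by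
    have cube_root := Real.rpow_inv_natCast_pow (x := h₀ ^ 2 * u₀ ^ 2 / g) (by positivity)
      three_ne_zero
    rw [Nat.cast_ofNat] at cube_root
    rw [hhmin, one_div, cube_root]
    field_simp
  have root_eq : ∀ h, φ h = 0 → (h₀ * u₀) ^ 2 = g * h ^ 2 * (3 * hstar - 2 * h) := by
    intro h hroot
    rw [hφ] at hroot
    rw [hhstar]
    field_simp
    linarith
  have h₂pos : 0 < h₂ := by linarith
  have below₁ : g * h₁ ^ 3 < (h₀ * u₀) ^ 2 :=
    root_eq h₁ hroot₁ ▸ mul_cube_lt_of_lt hg h₁pos.ne' h₁lt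
  have above₂ : (h₀ * u₀) ^ 2 < g * h₂ ^ 3 :=
    root_eq h₂ hroot₂ ▸ lt_mul_cube_of_lt hg h₂pos.ne' h₂gt
  have odd_three : Odd 3 := by decide
  refine ⟨?_, ?_, (mul_lt_div_sq_iff h₁pos.ne').2 below₁, (div_sq_lt_mul_iff h₂pos.ne').2 above₂⟩
  · exact odd_three.pow_lt_pow.1 (lt_of_mul_lt_mul_left (hmin_cube ▸ below₁) hg.le)
  · exact odd_three.pow_lt_pow.1 (lt_of_mul_lt_mul_left (hmin_cube ▸ above₂) hg.le)

/-- Lemma 2.1 (iii): if `a < a_max` and `0 < h₁ < h⋆ < h₂` are roots of `φ`,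
then `h₁ < h_min < h₂`; consequently the velocities `uᵢ = h₀ u₀ / hᵢ` satisfy
`u₁² > g h₁` (supersonic region `G₁ ∪ G₃`) and `u₂² < g h₂` (subsonic region `G₂`). -/
theorem stmt_8 (g h₀ u₀ a₀ a : ℝ) (hg : 0 < g) (hh₀ : 0 < h₀) (hu₀ : u₀ ≠ 0)
    (φ : ℝ → ℝ)
    (hφ : ∀ h, φ h = 2*g*h^3 + (2*g*(a - a₀ - h₀) - u₀^2)*h^2 + h₀^2*u₀^2)
    (hstar hmin amax : ℝ)
    (hhstar : hstar = (u₀^2 + 2*g*(a₀ + h₀ - a)) / (3*g))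
    (hhmin : hmin = (h₀^2 * u₀^2 / g) ^ ((1:ℝ)/3))
    (hamax : amax = a₀ + h₀ + u₀^2/(2*g) - (3/(2*g ^ ((1:ℝ)/3))) * (h₀^2 * u₀^2) ^ ((1:ℝ)/3))
    (ha : a < amax)
    (h₁ h₂ : ℝ) (h₁pos : 0 < h₁) (h₁lt : h₁ < hstar) (h₂gt : hstar < h₂)
    (hroot₁ : φ h₁ = 0) (hroot₂ : φ h₂ = 0) :
    h₁ < hmin ∧ hmin < h₂ ∧
    (h₀*u₀/h₁)^2 > g*h₁ ∧ (h₀*u₀/h₂)^2 < g*h₂ :=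
  stmt_8_general g h₀ u₀ a₀ a hg φ hφ hstar hmin hhstar hhmin h₁ h₂ h₁pos h₁lt h₂gt hroot₁ hroot₂
end

section
/- Let g > 0, h₀ > 0, u₀ ≠ 0, a₀ ∈ ℝ, and along the stationary-wave curve 𝒲₃(U₀) define, for h > 0, u(h) = h₀·u₀/h and a(h) = a₀ + (u₀² − u(h)²)/(2g) + h₀ − h. Then for every h > 0 the derivative of a satisfies a'(h) = (u(h)² − g·h)/(g·h); consequently, with h_min = (h₀²·u₀²/g)^{1/3}, the function a is strictly increasing on (0, h_min] and strictly decreasing on [h_min, ∞). In particular a'(h) has the same sign as u(h)² − g·h: a is increasing where the state is in G₁ ∪ G₃ (u² > gh) and decreasing where it is in G₂ (u² < gh). -/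
/-!
Writing `K = (h₀ u₀)²`, the bottom level along the curve is `a(h) = c - K / (2g h²) - h` for a
constant `c`, so `a'(h) = K / (g h³) - 1 = (u(h)² - g h) / (g h)`. For `h > 0` this is positive
exactly when `h³ < K / g`, i.e. `h < h_min`, and negative exactly when `h > h_min`; strict
monotonicity on each side of `h_min` then follows from the mean value theorem, since `a` is
continuous away from `0`.
-/

open Set

theorem lt_rpow_one_div_three_iff {x y : ℝ} (hx : 0 ≤ x) (hy : 0 ≤ y) :
    x < y ^ ((1 : ℝ) / 3) ↔ x ^ 3 < y := by
  rw [one_div, Real.lt_rpow_inv_iff_of_pos hx hy (by norm_num)]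
  norm_cast

theorem rpow_one_div_three_lt_iff {x y : ℝ} (hx : 0 ≤ x) (hy : 0 ≤ y) :
    x ^ ((1 : ℝ) / 3) < y ↔ x < y ^ 3 := by
  rw [one_div, Real.rpow_inv_lt_iff_of_pos hx hy (by norm_num)]
  norm_cast

theorem div_mul_pow_three_sub_one_pos_iff {K g h : ℝ} (hg : 0 < g) (hK : 0 ≤ K) (hh : 0 < h) :
    0 < K / (g * h ^ 3) - 1 ↔ h < (K / g) ^ ((1 : ℝ) / 3) := by
  rw [lt_rpow_one_div_three_iff hh.le (div_nonneg hK hg.le), sub_pos, one_lt_div (by positivity),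
    lt_div_iff₀ hg, mul_comm]

theorem div_mul_pow_three_sub_one_neg_iff {K g h : ℝ} (hg : 0 < g) (hK : 0 ≤ K) (hh : 0 < h) :
    K / (g * h ^ 3) - 1 < 0 ↔ (K / g) ^ ((1 : ℝ) / 3) < h := by
  rw [rpow_one_div_three_lt_iff (div_nonneg hK hg.le) hh.le, sub_neg, div_lt_one (by positivity),
    div_lt_iff₀ hg, mul_comm]

/-- The bottom level along `𝒲₃(U₀)`, with `c = a₀ + u₀² / (2g) + h₀` and `K = (h₀ u₀)²`. -/
noncomputable def stationaryBottom (c K g : ℝ) (h : ℝ) : ℝ :=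
  c - K / (2 * g) * (h ^ 2)⁻¹ - h

namespace stationaryBottom

variable {c K g : ℝ}

theorem hasDerivAt (hg : g ≠ 0) {h : ℝ} (hh : h ≠ 0) :
    HasDerivAt (stationaryBottom c K g) (K / (g * h ^ 3) - 1) h := by
  have hsq : HasDerivAt (fun x : ℝ => x ^ 2) (2 * h) h := by
    simpa using hasDerivAt_pow 2 h
  have hd := (((hsq.inv (pow_ne_zero 2 hh)).const_mul (K / (2 * g))).const_sub c).sub
    (hasDerivAt_id' h)
  refine hd.congr_deriv ?_
  field_simp

theorem continuousOn (hg : g ≠ 0) : ContinuousOn (stationaryBottom c K g) (Ioi 0) :=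
  fun _ hh => (hasDerivAt hg (ne_of_gt hh)).continuousAt.continuousWithinAt

theorem deriv_eq (hg : g ≠ 0) {h : ℝ} (hh : h ≠ 0) :
    deriv (stationaryBottom c K g) h = K / (g * h ^ 3) - 1 :=
  (hasDerivAt hg hh).deriv

theorem strictMonoOn_Ioc (hg : 0 < g) (hK : 0 ≤ K) :
    StrictMonoOn (stationaryBottom c K g) (Ioc 0 ((K / g) ^ ((1 : ℝ) / 3))) := by
  refine strictMonoOn_of_deriv_pos (convex_Ioc _ _)
    ((continuousOn hg.ne').mono fun _ hx => hx.1) fun h hh => ?_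
  rw [interior_Ioc] at hh
  rw [deriv_eq hg.ne' hh.1.ne']
  exact (div_mul_pow_three_sub_one_pos_iff hg hK hh.1).2 hh.2

theorem strictAntiOn_Ici (hg : 0 < g) (hK : 0 < K) :
    StrictAntiOn (stationaryBottom c K g) (Ici ((K / g) ^ ((1 : ℝ) / 3))) := by
  have hmin : 0 < (K / g) ^ ((1 : ℝ) / 3) := Real.rpow_pos_of_pos (div_pos hK hg) _
  refine strictAntiOn_of_deriv_neg (convex_Ici _)
    ((continuousOn hg.ne').mono fun _ hx => hmin.trans_le hx) fun h hh => ?_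
  rw [interior_Ici] at hh
  have hh₀ : 0 < h := hmin.trans hh
  rw [deriv_eq hg.ne' hh₀.ne']
  exact (div_mul_pow_three_sub_one_neg_iff hg hK.le hh₀).2 hh

end stationaryBottom

/-- along the stationary-wave curve `𝒲₃(U₀)`, with `u(h) = h₀ u₀ / h` and
`a(h) = a₀ + (u₀² - u(h)²)/(2g) + h₀ - h`, one has `a'(h) = (u(h)² - g h)/(g h)` for `h > 0`;
consequently, with `h_min = (h₀² u₀² / g)^(1/3)`, `a` is strictly increasing on `(0, h_min]`
and strictly decreasing on `[h_min, ∞)`. -/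
theorem stmt_10 (g h₀ u₀ a₀ : ℝ) (hg : 0 < g) (hh₀ : 0 < h₀) (hu₀ : u₀ ≠ 0)
    (u aa : ℝ → ℝ)
    (hu : ∀ h, u h = h₀*u₀/h)
    (haa : ∀ h, aa h = a₀ + (u₀^2 - (u h)^2)/(2*g) + h₀ - h)
    (hmin : ℝ) (hhmin : hmin = (h₀^2 * u₀^2 / g) ^ ((1:ℝ)/3)) :
    (∀ h, 0 < h → deriv aa h = ((u h)^2 - g*h)/(g*h)) ∧
    StrictMonoOn aa (Set.Ioc 0 hmin) ∧
    StrictAntiOn aa (Set.Ici hmin) := by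
  have hK : 0 < h₀ ^ 2 * u₀ ^ 2 := by positivity
  have haa_eq : aa = stationaryBottom (a₀ + u₀ ^ 2 / (2 * g) + h₀) (h₀ ^ 2 * u₀ ^ 2) g := by
    funext h
    rw [haa, hu, stationaryBottom]
    ring
  subst haa_eq hhmin
  refine ⟨fun h hh => ?_, stationaryBottom.strictMonoOn_Ioc hg hK.le,
    stationaryBottom.strictAntiOn_Ici hg hK⟩
  rw [stationaryBottom.deriv_eq hg.ne' hh.ne', hu]
  field_simp
end

section
/- Let g > 0 and let U = (h, u) with h > 0 and u > √(g·h) (i.e. U ∈ G₁). Define h♯ = (−h + √(h² + 8h·u²/g))/2 and u♯ = u·h/h♯. Then: (i) h♯ > h and h♯ > 0; (ii) the Rankine–Hugoniot relations with zero speed hold: h·u = h♯·u♯ and h·u² + g·h²/2 = h♯·(u♯)² + g·(h♯)²/2, so the discontinuity joining U to U♯ = (h♯, u♯) is a 1-shock with speed λ̄₁(U, U♯) = 0; (iii) 0 < u♯ < √(g·h♯), i.e. U♯ ∈ G₂ with positive velocity. -/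
/-!
`h♯` is the positive root of the quadratic `g x (x + h) = 2 h u²`, which is exactly what the
momentum relation becomes once mass conservation `h♯ u♯ = h u` is substituted (after dividing
out the trivial root `x = h`). Since `x ↦ g x (x + h)` is increasing and `g h (h + h) < 2 h u²`
in `G₁`, the root lies above `h`; then `h² u² = g h♯ (h♯ + h) h / 2 < g h♯³`, i.e. `u♯² < g h♯`.
-/

namespace ShallowWater

noncomputable def sharpDepth (g h u : ℝ) : ℝ := (-h + √(h ^ 2 + 8 * h * u ^ 2 / g)) / 2

variable {g h u s : ℝ}

theorem sharpDepth_quadratic (hg : g ≠ 0) (hD : 0 ≤ h ^ 2 + 8 * h * u ^ 2 / g) :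
    g * sharpDepth g h u * (sharpDepth g h u + h) = 2 * h * u ^ 2 := by
  have hsq : (2 * sharpDepth g h u + h) ^ 2 = h ^ 2 + 8 * h * u ^ 2 / g := by
    rw [sharpDepth, show 2 * ((-h + √(h ^ 2 + 8 * h * u ^ 2 / g)) / 2) + h
        = √(h ^ 2 + 8 * h * u ^ 2 / g) by ring, Real.sq_sqrt hD]
  field_simp at hsq
  linear_combination hsq / 4

theorem lt_sharpDepth (hg : 0 < g) (hh : 0 < h) (hu : g * h < u ^ 2) :
    h < sharpDepth g h u := by
  have hroot : 3 * h < √(h ^ 2 + 8 * h * u ^ 2 / g) := by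
    have h8 : 8 * h ^ 2 < 8 * h * u ^ 2 / g := by
      rw [lt_div_iff₀ hg]
      nlinarith
    rw [Real.lt_sqrt (by positivity)]
    linarith
  rw [sharpDepth]
  linarith

theorem momentum_eq_of_quadratic (hs : s ≠ 0) (hq : g * s * (s + h) = 2 * h * u ^ 2) :
    h * u ^ 2 + g * h ^ 2 / 2 = s * (u * h / s) ^ 2 + g * s ^ 2 / 2 := by
  field_simp
  linear_combination (h - s) * hq

theorem sq_div_lt_of_quadratic (hg : 0 < g) (hh : 0 < h) (hhs : h < s)
    (hq : g * s * (s + h) = 2 * h * u ^ 2) : (u * h / s) ^ 2 < g * s := by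
  have hs : 0 < s := hh.trans hhs
  rw [div_pow, div_lt_iff₀ (by positivity)]
  have hlt : (s + h) * h < 2 * s * s := by nlinarith
  calc (u * h) ^ 2 = g * s * ((s + h) * h) / 2 := by linear_combination -h * hq / 2
    _ < g * s * (2 * s * s) / 2 := by gcongr
    _ = g * s * s ^ 2 := by ring

end ShallowWater

open ShallowWater in
/-- Lemma 3.1: for `U = (h,u) ∈ G₁` (i.e. `u > √(gh)`), the state
`U♯ = (h♯, u♯)` with `h♯ = (-h + √(h² + 8hu²/g))/2` and `u♯ = u h / h♯` satisfies:
(i) `h♯ > h > 0`; (ii) the zero-speed Rankine–Hugoniot relations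
`h u = h♯ u♯` and `h u² + g h²/2 = h♯ u♯² + g h♯²/2`; (iii) `0 < u♯ < √(g h♯)`. -/
theorem stmt_11 (g h u : ℝ) (hg : 0 < g) (hh : 0 < h)
    (hG₁ : u > Real.sqrt (g*h))
    (hsharp usharp : ℝ)
    (hhsharp : hsharp = (-h + Real.sqrt (h^2 + 8*h*u^2/g))/2)
    (husharp : usharp = u*h/hsharp) :
    (h < hsharp ∧ 0 < hsharp) ∧
    (h*u = hsharp*usharp ∧ h*u^2 + g*h^2/2 = hsharp*usharp^2 + g*hsharp^2/2) ∧
    (0 < usharp ∧ usharp < Real.sqrt (g*hsharp)) := by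
  replace hhsharp : hsharp = sharpDepth g h u := hhsharp
  have hu : 0 < u := (Real.sqrt_nonneg _).trans_lt hG₁
  have hu2 : g * h < u ^ 2 := (Real.sqrt_lt' hu).mp hG₁
  have hlt : h < hsharp := hhsharp ▸ lt_sharpDepth hg hh hu2
  have hpos : 0 < hsharp := hh.trans hlt
  have hq : g * hsharp * (hsharp + h) = 2 * h * u ^ 2 :=
    hhsharp ▸ sharpDepth_quadratic hg.ne' (by positivity)
  subst husharp
  refine ⟨⟨hlt, hpos⟩, ⟨by field_simp, momentum_eq_of_quadratic hpos.ne' hq⟩, by positivity, ?_⟩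
  exact (Real.lt_sqrt (by positivity)).mpr (sq_div_lt_of_quadratic hg hh hlt hq)
end

section
/- Let g > 0 and let U = (h, u) with h > 0 and u > √(g·h). Let h♯ = (−h + √(h² + 8h·u²/g))/2. For any state V = (h_V, u_V) on the forward 1-shock curve S₁(U), i.e. h_V > h and u_V = u − √(g/2)·(h_V − h)·√(1/h_V + 1/h), the 1-shock speed λ̄₁(U, V) = (h_V·u_V − h·u)/(h_V − h) satisfies: λ̄₁(U, V) > 0 if and only if h_V < h♯ (i.e. V lies above U♯ on S₁(U)). -/
/-!
Along the 1-shock curve the shock speed simplifies to `u - √(g h_V (h_V + h) / (2h))`, so it is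
positive exactly when `h_V² + h h_V < 2 h u² / g`. Since `h_V > 0`, this quadratic inequality in
`h_V` holds exactly below its positive root, which is `h♯`.
-/

open Real

theorem lt_pos_root_iff {b c x : ℝ} (hx : 0 ≤ 2 * x + b) :
    x < (-b + √(b ^ 2 + 4 * c)) / 2 ↔ x ^ 2 + b * x < c := by
  rw [show x < (-b + √(b ^ 2 + 4 * c)) / 2 ↔ 2 * x + b < √(b ^ 2 + 4 * c) by
    constructor <;> intro <;> linarith, lt_sqrt hx]
  constructor <;> intro <;> nlinarith

theorem one_shock_speed_eq {g h hV u : ℝ} (hh : 0 < h) (hhV : 0 < hV) (hne : hV ≠ h) :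
    (hV * (u - √(g / 2) * (hV - h) * √(1 / hV + 1 / h)) - h * u) / (hV - h)
      = u - √(g * hV * (hV + h) / (2 * h)) := by
  have hsqrt : √(g * hV * (hV + h) / (2 * h)) = hV * (√(g / 2) * √(1 / hV + 1 / h)) := by
    rw [show g * hV * (hV + h) / (2 * h) = hV ^ 2 * (g / 2 * (1 / hV + 1 / h)) by field_simp; ring,
      sqrt_mul (sq_nonneg _), sqrt_sq hhV.le, sqrt_mul' _ (by positivity)]
  rw [hsqrt]
  field_simp [sub_ne_zero.mpr hne]
  ring

/-- for `U = (h,u) ∈ G₁` and any `V = (h_V, u_V)` on the forward 1-shock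
curve `S₁(U)`, the shock speed `λ̄₁(U,V) = (h_V u_V - h u)/(h_V - h)` is positive iff
`h_V < h♯`, where `h♯ = (-h + √(h² + 8hu²/g))/2`. -/
theorem stmt_12 (g h u : ℝ) (hg : 0 < g) (hh : 0 < h)
    (hG₁ : u > Real.sqrt (g*h))
    (hsharp : ℝ) (hhsharp : hsharp = (-h + Real.sqrt (h^2 + 8*h*u^2/g))/2)
    (hV uV : ℝ) (hhV : h < hV)
    (huV : uV = u - Real.sqrt (g/2) * (hV - h) * Real.sqrt (1/hV + 1/h)) :
    0 < (hV*uV - h*u)/(hV - h) ↔ hV < hsharp := by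
  subst hhsharp huV
  have hhV₀ : 0 < hV := hh.trans hhV
  have hu : 0 < u := (sqrt_nonneg _).trans_lt hG₁
  rw [one_shock_speed_eq hh hhV₀ hhV.ne', sub_pos, sqrt_lt' hu,
    show 8 * h * u ^ 2 / g = 4 * (2 * h * u ^ 2 / g) by ring, lt_pos_root_iff (by linarith),
    div_lt_iff₀ (by positivity), lt_div_iff₀ hg]
  constructor <;> intro <;> linarith
end

section
/- Let g > 0 and U₀ = (h₀, u₀) with h₀ > 0. Define w : (0, ∞) → ℝ by w(h) = u₀ − 2√g·(√h − √h₀) for 0 < h ≤ h₀ and w(h) = u₀ − √(g/2)·(h − h₀)·√(1/h + 1/h₀) for h > h₀ (the parameterization of the forward 1-wave curve 𝒲₁(U₀) = ℛ₁(U₀) ∪ 𝒮₁(U₀)). Then w is strictly decreasing and strictly convex on (0, ∞). -/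
/-!
Both branches are smooth on `(0, ∞)` and meet at `h₀` with the common value `u₀` and the common
slope `-√(g / h₀)`, so `w` is differentiable with `w' = -s`, where `s h = √g / √h` on the
rarefaction side and `s` is the shock slope on the other side. Hence `w` is strictly decreasing
since `s > 0`, and strictly convex since `s` is strictly decreasing; on the shock side the latter
becomes a polynomial inequality after squaring.
-/

open Real Set

theorem hasDerivAt_ite_le {f₁ f₂ f₁' f₂' : ℝ → ℝ} {a x : ℝ} (h₁ : HasDerivAt f₁ (f₁' x) x)
    (h₂ : HasDerivAt f₂ (f₂' x) x) (ha : f₁ a = f₂ a) (ha' : f₁' a = f₂' a) :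
    HasDerivAt (fun y => if y ≤ a then f₁ y else f₂ y) (if x ≤ a then f₁' x else f₂' x) x := by
  rcases lt_trichotomy x a with hxa | rfl | hax
  · rw [if_pos hxa.le]
    exact h₁.congr_of_eventuallyEq <|
      Filter.eventuallyEq_of_mem (Iio_mem_nhds hxa) fun y hy => if_pos (le_of_lt hy)
  · rw [if_pos le_rfl]
    have hleft : HasDerivWithinAt (fun y => if y ≤ x then f₁ y else f₂ y) (f₁' x) (Iic x) x :=
      h₁.hasDerivWithinAt.congr (fun y hy => if_pos hy) (if_pos le_rfl)
    have hright : HasDerivWithinAt (fun y => if y ≤ x then f₁ y else f₂ y) (f₁' x) (Ici x) x := by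
      refine (ha' ▸ h₂.hasDerivWithinAt).congr (fun y hy => ?_) (by rw [if_pos le_rfl, ha])
      rcases (mem_Ici.1 hy).eq_or_lt with rfl | hxy
      · rw [if_pos le_rfl, ha]
      · exact if_neg hxy.not_ge
    simpa [Iic_union_Ici] using hleft.union hright
  · rw [if_neg hax.not_ge]
    exact h₂.congr_of_eventuallyEq <|
      Filter.eventuallyEq_of_mem (Ioi_mem_nhds hax) fun y hy => if_neg (not_le.2 hy)

theorem strictAntiOn_const_div_sqrt {c : ℝ} (hc : 0 < c) : StrictAntiOn (fun h => c / √h) (Ioi 0) :=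
  fun _ hx _ _ hxy => div_lt_div_of_pos_left hc (sqrt_pos.2 hx) (sqrt_lt_sqrt (le_of_lt hx) hxy)

noncomputable def rarefactionBranch (g h₀ u₀ h : ℝ) : ℝ := u₀ - 2 * √g * (√h - √h₀)

noncomputable def shockBranch (g h₀ u₀ h : ℝ) : ℝ := u₀ - √(g / 2) * (h - h₀) * √(1 / h + 1 / h₀)

noncomputable def waveCurve (g h₀ u₀ h : ℝ) : ℝ :=
  if h ≤ h₀ then rarefactionBranch g h₀ u₀ h else shockBranch g h₀ u₀ h

noncomputable def shockSlope (g h₀ h : ℝ) : ℝ :=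
  √(g / 2) * ((2 * h ^ 2 + h * h₀ + h₀ ^ 2) / (2 * h ^ 2 * h₀ * √(1 / h + 1 / h₀)))

noncomputable def waveSlope (g h₀ h : ℝ) : ℝ := if h ≤ h₀ then √g / √h else shockSlope g h₀ h

section

variable {g h₀ u₀ h : ℝ}

theorem hasDerivAt_rarefactionBranch (hh : 0 < h) :
    HasDerivAt (rarefactionBranch g h₀ u₀) (-(√g / √h)) h := by
  refine ((((hasDerivAt_sqrt hh.ne').sub_const √h₀).const_mul (2 * √g)).const_sub u₀).congr_deriv ?_
  field_simp

theorem hasDerivAt_shockBranch (hh₀ : 0 < h₀) (hh : 0 < h) :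
    HasDerivAt (shockBranch g h₀ u₀) (-shockSlope g h₀ h) h := by
  have hp : 0 < 1 / h + 1 / h₀ := by positivity
  have hroot :
      HasDerivAt (fun x => √(1 / x + 1 / h₀)) (-(1 / h ^ 2) / (2 * √(1 / h + 1 / h₀))) h := by
    refine HasDerivAt.sqrt ?_ hp.ne'
    simpa [one_div] using (hasDerivAt_inv hh.ne').add_const h₀⁻¹
  have hlin : HasDerivAt (fun x => √(g / 2) * (x - h₀)) √(g / 2) h := by
    simpa using ((hasDerivAt_id h).sub_const h₀).const_mul √(g / 2)
  refine ((hlin.mul hroot).const_sub u₀).congr_deriv ?_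
  have hsq : √(1 / h + 1 / h₀) ^ 2 * h * h₀ = h₀ + h := by
    rw [sq_sqrt hp.le]; field_simp
  have hne : √(1 / h + 1 / h₀) ≠ 0 := (sqrt_pos.2 hp).ne'
  unfold shockSlope
  generalize √(1 / h + 1 / h₀) = r at hsq hne ⊢
  field_simp
  linear_combination (-2 * √(g / 2) * h) * hsq

theorem shockSlope_self (hh₀ : 0 < h₀) : shockSlope g h₀ h₀ = √g / √h₀ := by
  have hroot : √(1 / h₀ + 1 / h₀) = √2 / √h₀ := by rw [← sqrt_div' _ hh₀.le]; ring_nf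
  have : √h₀ ≠ 0 := (sqrt_pos.2 hh₀).ne'
  have : √(2:ℝ) ≠ 0 := by positivity
  rw [shockSlope, hroot, sqrt_div' _ zero_le_two]
  field_simp
  rw [sq_sqrt hh₀.le, sq_sqrt zero_le_two]
  ring

theorem shockSlope_sq (hg : 0 ≤ g) (hh₀ : 0 < h₀) (hh : 0 < h) :
    shockSlope g h₀ h ^ 2
      = g * (2 * h ^ 2 + h * h₀ + h₀ ^ 2) ^ 2 / (8 * h ^ 3 * h₀ * (h + h₀)) := by
  rw [shockSlope, mul_pow, div_pow, mul_pow, sq_sqrt (by positivity), sq_sqrt (by positivity)]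
  field_simp
  ring

theorem shockSlope_strictAntiOn (hg : 0 < g) (hh₀ : 0 < h₀) :
    StrictAntiOn (shockSlope g h₀) (Ioi 0) := by
  intro x (hx : 0 < x) y (hy : 0 < y) hxy
  -- the difference of the two sides of `hpoly` is `(y - x) * Q` with `Q` the positive polynomial
  have hQ : 0 < x ^ 2 * h₀ ^ 5 + x ^ 3 * h₀ ^ 4
      + y * (x * h₀ ^ 5 + 3 * x ^ 2 * h₀ ^ 4 + 2 * x ^ 3 * h₀ ^ 3)
      + y ^ 2 * (h₀ ^ 5 + 3 * x * h₀ ^ 4 + 7 * x ^ 2 * h₀ ^ 3 + 5 * x ^ 3 * h₀ ^ 2)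
      + y ^ 3 * (h₀ ^ 4 + 2 * x * h₀ ^ 3 + 5 * x ^ 2 * h₀ ^ 2) := by
    positivity
  have hpoly : (2 * y ^ 2 + y * h₀ + h₀ ^ 2) ^ 2 * (x ^ 3 * (x + h₀))
      < (2 * x ^ 2 + x * h₀ + h₀ ^ 2) ^ 2 * (y ^ 3 * (y + h₀)) := by
    linear_combination mul_pos (sub_pos.2 hxy) hQ
  refine lt_of_pow_lt_pow_left₀ 2 (by unfold shockSlope; positivity) ?_
  rw [shockSlope_sq hg.le hh₀ hx, shockSlope_sq hg.le hh₀ hy,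
    div_lt_div_iff₀ (by positivity) (by positivity)]
  linarith [mul_lt_mul_of_pos_left hpoly (show (0:ℝ) < 8 * g * h₀ from by positivity)]

theorem hasDerivAt_waveCurve (hh₀ : 0 < h₀) (hh : 0 < h) :
    HasDerivAt (waveCurve g h₀ u₀) (-waveSlope g h₀ h) h := by
  rw [waveSlope, apply_ite Neg.neg]
  exact hasDerivAt_ite_le (f₁' := fun h => -(√g / √h)) (f₂' := fun h => -shockSlope g h₀ h)
    (hasDerivAt_rarefactionBranch hh) (hasDerivAt_shockBranch hh₀ hh)
    (by simp [rarefactionBranch, shockBranch]) (by rw [shockSlope_self hh₀])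

theorem waveSlope_pos (hg : 0 < g) (hh₀ : 0 < h₀) (hh : 0 < h) : 0 < waveSlope g h₀ h := by
  unfold waveSlope shockSlope
  split_ifs <;> positivity

theorem waveSlope_strictAntiOn (hg : 0 < g) (hh₀ : 0 < h₀) :
    StrictAntiOn (waveSlope g h₀) (Ioi 0) := by
  rw [← Ioc_union_Ici_eq_Ioi hh₀]
  refine StrictAntiOn.union ?_ ?_ (isGreatest_Ioc hh₀) isLeast_Ici
  · exact (strictAntiOn_const_div_sqrt (sqrt_pos.2 hg)).mono Ioc_subset_Ioi_self |>.congr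
      fun h hh => (if_pos hh.2).symm
  · refine (shockSlope_strictAntiOn hg hh₀).mono (Ici_subset_Ioi.2 hh₀) |>.congr
      fun h (hh : h₀ ≤ h) => ?_
    rcases hh.eq_or_lt with rfl | hh
    · rw [waveSlope, if_pos le_rfl, shockSlope_self hh₀]
    · exact (if_neg hh.not_ge).symm

end

/-- the forward 1-wave curve `𝒲₁(U₀) = ℛ₁(U₀) ∪ 𝒮₁(U₀)`, parameterized by
`h ↦ w(h)` with the rarefaction branch for `h ≤ h₀` and the shock branch for `h > h₀`,
is strictly decreasing and strictly convex on `(0, ∞)`. -/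
theorem stmt_15 (g h₀ u₀ : ℝ) (hg : 0 < g) (hh₀ : 0 < h₀)
    (w : ℝ → ℝ)
    (hw : ∀ h, w h = if h ≤ h₀ then u₀ - 2*Real.sqrt g*(Real.sqrt h - Real.sqrt h₀)
      else u₀ - Real.sqrt (g/2)*(h - h₀)*Real.sqrt (1/h + 1/h₀)) :
    StrictAntiOn w (Set.Ioi 0) ∧ StrictConvexOn ℝ (Set.Ioi 0) w := by
  obtain rfl : w = waveCurve g h₀ u₀ := funext hw
  have hderiv : ∀ h ∈ Ioi (0:ℝ), HasDerivAt (waveCurve g h₀ u₀) (-waveSlope g h₀ h) h :=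
    fun _ hh => hasDerivAt_waveCurve hh₀ hh
  have hcont : ContinuousOn (waveCurve g h₀ u₀) (Ioi 0) :=
    fun h hh => (hderiv h hh).continuousAt.continuousWithinAt
  refine ⟨strictAntiOn_of_deriv_neg (convex_Ioi 0) hcont fun h hh => ?_,
    StrictMonoOn.strictConvexOn_of_deriv (convex_Ioi 0) hcont ?_⟩ <;> rw [interior_Ioi] at *
  · rw [(hderiv h hh).deriv, neg_lt_zero]
    exact waveSlope_pos hg hh₀ hh
  · exact (waveSlope_strictAntiOn hg hh₀).neg.congr fun h hh => (hderiv h hh).deriv.symm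
end

section
/- Let g > 0, h_L > 0, u_L ≥ 0, h_R > 0, u_R ∈ ℝ. Define, for h > 0, G₁(h) = h_L·u_L/h − (u_R + (h − h_R)·√((g/2)·(1/h + 1/h_R))) and G₂(h) = h_L·u_L/h − (u_R + 2√g·(√h − √h_R)). Then G₁'(h) < 0 and G₂'(h) < 0 for all h > 0; in particular G₁ and G₂ are strictly decreasing on (0, ∞) and each has at most one positive root. -/
/-!
Both `G₁` and `G₂` are the strictly decreasing velocity `h_L u_L / h` of the stationary wave
minus a strictly increasing backward 2-wave velocity. For the rarefaction branch this is clear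
from `√h`; for the shock branch, with `s = √((g/2)(1/h + 1/h_R))`, the derivative of
`(h - h_R) s` equals `(g / (4 h² s)) (h + h_R + 2h²/h_R) > 0`.
-/

open Real Set

lemma strictAntiOn_Ioi_of_deriv_neg {f : ℝ → ℝ} (hf : ∀ x, 0 < x → deriv f x < 0) :
    StrictAntiOn f (Ioi 0) := by
  refine strictAntiOn_of_deriv_neg (convex_Ioi 0) (fun x hx => ?_) (by simpa using hf)
  exact (differentiableAt_of_deriv_ne_zero (hf x hx).ne).continuousAt.continuousWithinAt

lemma deriv_const_div_sub_neg {φ : ℝ → ℝ} {c a x : ℝ} (hc : 0 ≤ c) (hx : 0 < x)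
    (hφ : 0 < deriv φ x) : deriv (fun y => c / y - (a + φ y)) x < 0 := by
  have hφd : DifferentiableAt ℝ φ x := differentiableAt_of_deriv_ne_zero hφ.ne'
  have hG := ((hasDerivAt_const x c).fun_div (hasDerivAt_id' x) hx.ne').fun_sub
    (hφd.hasDerivAt.const_add a)
  rw [hG.deriv, zero_mul, zero_sub, mul_one, neg_div]
  have : 0 ≤ c / x ^ 2 := by positivity
  linarith

lemma deriv_rarefaction_pos {g hR x : ℝ} (hg : 0 < g) (hx : 0 < x) :
    0 < deriv (fun y => 2 * √g * (√y - √hR)) x := by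
  have := ((hasDerivAt_sqrt hx.ne').sub_const (√hR)).const_mul (2 * √g)
  rw [this.deriv]
  positivity

lemma deriv_shock_pos {g hR x : ℝ} (hg : 0 < g) (hhR : 0 < hR) (hx : 0 < x) :
    0 < deriv (fun y => (y - hR) * √((g / 2) * (1 / y + 1 / hR))) x := by
  set q := (g / 2) * (1 / x + 1 / hR) with hq
  have hq0 : 0 < q := by positivity
  have hinner : HasDerivAt (fun y => (g / 2) * (1 / y + 1 / hR)) ((g / 2) * (-(x ^ 2)⁻¹)) x := by
    simpa [one_div] using ((hasDerivAt_inv hx.ne').add_const hR⁻¹).const_mul (g / 2)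
  have hD := ((hasDerivAt_id' x).sub_const hR).fun_mul (hinner.sqrt hq0.ne')
  have hval : 1 * √q + (x - hR) * (g / 2 * -(x ^ 2)⁻¹ / (2 * √q))
      = g * (x + hR + 2 * x ^ 2 / hR) / (4 * x ^ 2 * √q) := by
    field_simp
    rw [sq_sqrt hq0.le, hq]
    field_simp
    ring
  rw [hD.deriv, hval]
  positivity

/-- the functions `G₁(h) = h_L u_L / h - (u_R + (h - h_R)√((g/2)(1/h + 1/h_R)))`
and `G₂(h) = h_L u_L / h - (u_R + 2√g (√h - √h_R))` have negative derivative on `(0,∞)`;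
in particular they are strictly decreasing there and each has at most one positive root. -/
theorem stmt_16 (g hL uL hR uR : ℝ) (hg : 0 < g) (hhL : 0 < hL) (huL : 0 ≤ uL)
    (hhR : 0 < hR)
    (G₁ G₂ : ℝ → ℝ)
    (hG₁ : ∀ h, G₁ h = hL*uL/h - (uR + (h - hR)*Real.sqrt ((g/2)*(1/h + 1/hR))))
    (hG₂ : ∀ h, G₂ h = hL*uL/h - (uR + 2*Real.sqrt g*(Real.sqrt h - Real.sqrt hR))) :
    (∀ h, 0 < h → deriv G₁ h < 0 ∧ deriv G₂ h < 0) ∧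
    StrictAntiOn G₁ (Set.Ioi 0) ∧ StrictAntiOn G₂ (Set.Ioi 0) ∧
    (∀ x y, 0 < x → 0 < y → G₁ x = 0 → G₁ y = 0 → x = y) ∧
    (∀ x y, 0 < x → 0 < y → G₂ x = 0 → G₂ y = 0 → x = y) := by
  obtain rfl : G₁ = _ := funext hG₁
  obtain rfl : G₂ = _ := funext hG₂
  have hc : 0 ≤ hL * uL := by positivity
  have hd₁ : ∀ h : ℝ, 0 < h →
      deriv (fun h => hL*uL/h - (uR + (h - hR)*√((g/2)*(1/h + 1/hR)))) h < 0 := fun h hh =>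
    deriv_const_div_sub_neg hc hh (deriv_shock_pos hg hhR hh)
  have hd₂ : ∀ h : ℝ, 0 < h →
      deriv (fun h => hL*uL/h - (uR + 2*√g*(√h - √hR))) h < 0 := fun h hh =>
    deriv_const_div_sub_neg hc hh (deriv_rarefaction_pos hg hh)
  have hA₁ := strictAntiOn_Ioi_of_deriv_neg hd₁
  have hA₂ := strictAntiOn_Ioi_of_deriv_neg hd₂
  exact ⟨fun h hh => ⟨hd₁ h hh, hd₂ h hh⟩, hA₁, hA₂,
    fun x y hx hy ex ey => hA₁.injOn hx hy (ex.trans ey.symm),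
    fun x y hx hy ex ey => hA₂.injOn hx hy (ex.trans ey.symm)⟩
end
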